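/- Let G be a graph, let (T, β) be a tree decomposition of G, and let S_ℓ be an independent set in G such that for each s ∈ S_ℓ a node x_s of T with s ∈ β(x_s) is chosen. Construct T' from T by adding, for every s ∈ S_ℓ, a new leaf node y_s adjacent to x_s, and define β'(x) = (β(x) \ S_ℓ) ∪ N(β(x) ∩ S_ℓ) for every node x of T, and β'(y_s) = N[s] for every s ∈ S_ℓ. Then (T', β') is a tree decomposition of G. -/

import Mathlib

/-- A set of vertices is independent: pairwise nonadjacent. -/
def IsIndep {V : Type*} (G : SimpleGraph V) (s : Set V) : Prop :=
  s.Pairwise fun u v => ¬ G.Adj u v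

/-- Independence number of the subgraph of `G` induced by `X`. -/
noncomputable def indepNumOn {V : Type*} (G : SimpleGraph V) (X : Set V) : ℕ :=
  sSup {k | ∃ s : Finset V, ↑s ⊆ X ∧ IsIndep G ↑s ∧ s.card = k}

/-- `M` is a matching in `G`: adjacent endpoints, pairwise vertex-disjoint edges. -/
def IsMatching' {V : Type*} (G : SimpleGraph V) (M : Finset (V × V)) : Prop :=
  (∀ e ∈ M, G.Adj e.1 e.2) ∧
  ∀ e ∈ M, ∀ f ∈ M, e ≠ f →
    e.1 ≠ f.1 ∧ e.1 ≠ f.2 ∧ e.2 ≠ f.1 ∧ e.2 ≠ f.2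

/-- `M` is an induced matching in `G`. -/
def IsInducedMatching {V : Type*} (G : SimpleGraph V) (M : Finset (V × V)) : Prop :=
  IsMatching' G M ∧
  ∀ e ∈ M, ∀ f ∈ M, e ≠ f →
    ¬ G.Adj e.1 f.1 ∧ ¬ G.Adj e.1 f.2 ∧ ¬ G.Adj e.2 f.1 ∧ ¬ G.Adj e.2 f.2

/-- `μ(G, X)`: maximum size of an induced matching in `G` every edge of which
has an endpoint in `X`. -/
noncomputable def indMatchNumOn {V : Type*} (G : SimpleGraph V) (X : Set V) : ℕ :=
  sSup {k | ∃ M : Finset (V × V), IsInducedMatching G M ∧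
    (∀ e ∈ M, e.1 ∈ X ∨ e.2 ∈ X) ∧ M.card = k}

/-- `(T, bag)` is a tree decomposition of `G`. -/
structure IsTreeDecomp {V : Type*} (G : SimpleGraph V) {ι : Type}
    (T : SimpleGraph ι) (bag : ι → Set V) : Prop where
  isTree : T.IsTree
  edge_mem : ∀ ⦃u v : V⦄, G.Adj u v → ∃ x, u ∈ bag x ∧ v ∈ bag x
  support_connected : ∀ v : V, (T.induce {x | v ∈ bag x}).Connected

/-- A (bundled) tree decomposition of `G`. -/
structure TreeDecomp {V : Type*} (G : SimpleGraph V) where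
  ι : Type
  tree : SimpleGraph ι
  bag : ι → Set V
  is_td : IsTreeDecomp G tree bag

/-- Independence number of a tree decomposition. -/
noncomputable def TreeDecomp.alpha {V : Type*} {G : SimpleGraph V} (D : TreeDecomp G) : ℕ :=
  sSup {k | ∃ x : D.ι, k = indepNumOn G (D.bag x)}

/-- Induced matching number of a tree decomposition. -/
noncomputable def TreeDecomp.mu {V : Type*} {G : SimpleGraph V} (D : TreeDecomp G) : ℕ :=
  sSup {k | ∃ x : D.ι, k = indMatchNumOn G (D.bag x)}

/-- Tree-independence number of `G`. -/
noncomputable def treeIndepNum {V : Type*} (G : SimpleGraph V) : ℕ :=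
  sInf {k | ∃ D : TreeDecomp G, D.alpha = k}

/-- Induced matching treewidth of `G`. -/
noncomputable def imTreewidth {V : Type*} (G : SimpleGraph V) : ℕ :=
  sInf {k | ∃ D : TreeDecomp G, D.mu = k}

/-- `G` has no induced subgraph isomorphic to `K_{t,t}`. -/
def KttFree {V : Type*} (G : SimpleGraph V) (t : ℕ) : Prop :=
  IsEmpty (completeBipartiteGraph (Fin t) (Fin t) ↪g G)

/-- `G` contains `K_{t,t}` as a (not necessarily induced) subgraph. -/
def HasKttSubgraph {V : Type*} (G : SimpleGraph V) (t : ℕ) : Prop :=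
  ∃ A B : Finset V, Disjoint A B ∧ A.card = t ∧ B.card = t ∧
    ∀ a ∈ A, ∀ b ∈ B, G.Adj a b

/-- `G` is bipartite: its vertex set is the union of two independent sets. -/
def IsBipartite {V : Type*} (G : SimpleGraph V) : Prop :=
  ∃ A B : Set V, A ∪ B = Set.univ ∧ IsIndep G A ∧ IsIndep G B

/-- `N(X)`: vertices outside `X` adjacent to at least one vertex of `X`. -/
def nbhd {V : Type*} (G : SimpleGraph V) (X : Set V) : Set V :=
  {v | v ∉ X ∧ ∃ u ∈ X, G.Adj u v}


/-!
Hanging a leaf `y_s` on the node `x_s` keeps `T` a tree, since a cycle cannot pass through a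
vertex of degree one. An edge meeting `S` lies in the leaf bag `N[s]` of its endpoint `s`, and
any other edge stays in its old bag. For `s ∈ S`, independence makes `y_s` the only node whose new
bag contains `s`. For `v ∉ S`, the nodes of `T` whose new bag contains `v` are those whose old bag
contains `v` or a neighbour `s ∈ S` of `v`: a union of subtrees, each meeting the subtree of `v`
at a bag containing the edge `sv`, hence connected; and each leaf `y_s` whose bag contains `v` is
hung at `x_s`, which lies in this union.
-/

namespace SimpleGraph

variable {V W : Type*} {G : SimpleGraph V} {H : SimpleGraph W}

theorem Walk.exists_map_eq_of_forall_mem_range (f : G ↪g H) {x y : W} (p : H.Walk x y)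
    (hp : ∀ z ∈ p.support, z ∈ Set.range f) :
    ∃ (u v : V) (hu : f u = x) (hv : f v = y) (q : G.Walk u v),
      (q.map f.toHom).copy hu hv = p := by
  induction p with
  | nil =>
    obtain ⟨u, rfl⟩ := hp _ (start_mem_support _)
    exact ⟨u, u, rfl, rfl, nil, rfl⟩
  | cons h p ih =>
    obtain ⟨u, rfl⟩ := hp _ (start_mem_support _)
    obtain ⟨w, v, rfl, rfl, q, rfl⟩ := ih fun z hz => hp z (by simp [hz])
    exact ⟨u, v, rfl, rfl, cons (f.map_adj_iff.mp h) q, rfl⟩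

theorem IsAcyclic.exists_notMem_range_of_isCycle (hG : G.IsAcyclic) (f : G ↪g H) {w : W}
    {c : H.Walk w w} (hc : c.IsCycle) : ∃ z ∈ c.support, z ∉ Set.range f := by
  by_contra! hrange
  obtain ⟨u, v, rfl, hv, q, rfl⟩ := c.exists_map_eq_of_forall_mem_range f hrange
  obtain rfl := f.injective hv
  rw [Walk.isCycle_copy, Walk.isCycle_map_iff_of_injective f.injective] at hc
  exact hG q hc

theorem induce_union_iUnion_connected {ι : Sort*} {B : Set V} {C : ι → Set V}
    (hB : (G.induce B).Connected) (hC : ∀ i, (G.induce (C i)).Connected)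
    (hBC : ∀ i, (B ∩ C i).Nonempty) : (G.induce (B ∪ ⋃ i, C i)).Connected := by
  obtain ⟨⟨u, hu⟩⟩ := hB.nonempty
  refine G.induce_connected_of_patches u (Or.inl hu) fun {v} hv => ?_
  obtain hv | hv := hv
  · exact ⟨B, Set.subset_union_left, hu, hv, hB.preconnected _ _⟩
  · obtain ⟨i, hi⟩ := Set.mem_iUnion.mp hv
    exact ⟨B ∪ C i, Set.union_subset_union_right _ (Set.subset_iUnion C i), Or.inl hu, Or.inr hi,
      (induce_union_connected hB.preconnected (hC i).preconnected (hBC i)).preconnected _ _⟩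

section attachLeaves

variable {ι S : Type*} {T : SimpleGraph ι} {σ : S → ι}

def attachLeaves (T : SimpleGraph ι) (σ : S → ι) : SimpleGraph (ι ⊕ S) :=
  fromRel fun a b => Sum.elim (fun a => Sum.elim (T.Adj a) (fun s => a = σ s) b) (fun _ => False) a

@[simp]
theorem attachLeaves_adj_inl_inl {a b : ι} :
    (attachLeaves T σ).Adj (.inl a) (.inl b) ↔ T.Adj a b := by
  simpa [attachLeaves, T.adj_comm b a] using fun h => h.ne

@[simp]
theorem attachLeaves_adj_inl_inr {a : ι} {s : S} :
    (attachLeaves T σ).Adj (.inl a) (.inr s) ↔ a = σ s := by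
  simp [attachLeaves]

@[simp]
theorem attachLeaves_adj_inr_inl {a : ι} {s : S} :
    (attachLeaves T σ).Adj (.inr s) (.inl a) ↔ a = σ s := by
  simp [attachLeaves]

@[simp]
theorem not_attachLeaves_adj_inr_inr {s t : S} : ¬ (attachLeaves T σ).Adj (.inr s) (.inr t) := by
  simp [attachLeaves]

theorem eq_inl_of_attachLeaves_adj_inr {s : S} {x : ι ⊕ S}
    (h : (attachLeaves T σ).Adj (.inr s) x) : x = .inl (σ s) := by
  cases x <;> simp_all

def inlAttachLeaves (T : SimpleGraph ι) (σ : S → ι) : T ↪g attachLeaves T σ where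
  toFun := .inl
  inj' := Sum.inl_injective
  map_rel_iff' := attachLeaves_adj_inl_inl

theorem isAcyclic_attachLeaves (hT : T.IsAcyclic) : (attachLeaves T σ).IsAcyclic := by
  classical
  intro w c hc
  obtain ⟨z, hz, hzr⟩ := hT.exists_notMem_range_of_isCycle (inlAttachLeaves T σ) hc
  obtain ⟨s, rfl⟩ : ∃ s, z = .inr s := by
    cases z with
    | inl a => exact absurd ⟨a, rfl⟩ hzr
    | inr s => exact ⟨s, rfl⟩
  -- the two neighbours of a vertex on a cycle are distinct, but a leaf has only one neighbour
  have hc' := hc.rotate hz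
  exact hc'.snd_ne_penultimate <|
    (eq_inl_of_attachLeaves_adj_inr (Walk.adj_snd hc'.not_nil)).trans
      (eq_inl_of_attachLeaves_adj_inr (Walk.adj_penultimate hc'.not_nil).symm).symm

theorem induce_attachLeaves_connected {A : Set (ι ⊕ S)}
    (hA : (T.induce (Sum.inl ⁻¹' A)).Connected)
    (hleaf : ∀ s, .inr s ∈ A → .inl (σ s) ∈ A) : ((attachLeaves T σ).induce A).Connected := by
  obtain ⟨⟨a₀, ha₀⟩⟩ := hA.nonempty
  have hinl : ∀ a (ha : .inl a ∈ A),
      ((attachLeaves T σ).induce A).Reachable ⟨.inl a₀, ha₀⟩ ⟨.inl a, ha⟩ := fun a ha =>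
    (hA.preconnected ⟨a₀, ha₀⟩ ⟨a, ha⟩).map
      (induceHom (inlAttachLeaves T σ).toHom (Set.mapsTo_preimage _ _))
  refine (connected_iff_exists_forall_reachable _).mpr ⟨⟨.inl a₀, ha₀⟩, ?_⟩
  rintro ⟨a | s, hx⟩
  · exact hinl a hx
  · exact (hinl _ (hleaf s hx)).trans (Adj.reachable (by simp))

theorem connected_attachLeaves (hT : T.Connected) : (attachLeaves T σ).Connected := by
  rw [← (induceUnivIso _).connected_iff]
  refine induce_attachLeaves_connected ?_ fun _ _ => Set.mem_univ _
  rwa [Set.preimage_univ, (induceUnivIso _).connected_iff]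

theorem IsTree.attachLeaves (hT : T.IsTree) : (attachLeaves T σ).IsTree :=
  ⟨connected_attachLeaves hT.connected, isAcyclic_attachLeaves hT.isAcyclic⟩

end attachLeaves

end SimpleGraph

open SimpleGraph

section detachBags

variable {V ι : Type*} {G : SimpleGraph V} {bag : ι → Set V} {S : Set V} {v : V}

def detachBags (G : SimpleGraph V) (bag : ι → Set V) (S : Set V) : ι ⊕ S → Set V :=
  Sum.elim (fun x => (bag x \ S) ∪ nbhd G (bag x ∩ S)) fun s => insert (s : V) (G.neighborSet s)

@[simp]
theorem mem_detachBags_inr {s : S} : v ∈ detachBags G bag S (.inr s) ↔ v = s ∨ G.Adj s v :=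
  Iff.rfl

theorem mem_detachBags_inl_of_notMem (hv : v ∉ S) {x : ι} :
    v ∈ detachBags G bag S (.inl x) ↔ v ∈ bag x ∨ ∃ s ∈ bag x ∩ S, G.Adj s v := by
  simp [detachBags, nbhd, hv]

theorem setOf_mem_detachBags_of_mem (hS : IsIndep G S) (hv : v ∈ S) :
    {y | v ∈ detachBags G bag S y} = {.inr ⟨v, hv⟩} := by
  have hnadj (u : V) (hu : u ∈ S) : ¬ G.Adj u v := fun h => hS hu hv h.ne h
  ext (x | s)
  · simpa [detachBags, nbhd, hv] using fun _ u _ hu => hnadj u hu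
  · simpa [Subtype.ext_iff, eq_comm] using fun h => absurd h (hnadj s s.2)

theorem preimage_inl_setOf_mem_detachBags (hv : v ∉ S) :
    Sum.inl ⁻¹' {y | v ∈ detachBags G bag S y} =
      {x | v ∈ bag x} ∪ ⋃ s : {s : S // G.Adj s v}, {x | (s : V) ∈ bag x} := by
  ext x
  simp only [Set.mem_preimage, Set.mem_ofPred_eq, mem_detachBags_inl_of_notMem hv, Set.mem_union,
    Set.mem_iUnion]
  exact or_congr_right ⟨fun ⟨s, ⟨hx, hs⟩, h⟩ => ⟨⟨⟨s, hs⟩, h⟩, hx⟩,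
    fun ⟨⟨s, h⟩, hx⟩ => ⟨s, ⟨hx, s.2⟩, h⟩⟩

end detachBags

theorem IsTreeDecomp.attachLeaves {V ι : Type} {G : SimpleGraph V} {T : SimpleGraph ι}
    {bag : ι → Set V} (hTD : IsTreeDecomp G T bag) {S : Set V} (hS : IsIndep G S) {σ : S → ι}
    (hσ : ∀ s : S, (s : V) ∈ bag (σ s)) :
    IsTreeDecomp G (T.attachLeaves σ) (detachBags G bag S) where
  isTree := hTD.isTree.attachLeaves
  edge_mem u v huv := by
    by_cases hu : u ∈ S
    · exact ⟨.inr ⟨u, hu⟩, by simp [huv]⟩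
    by_cases hv : v ∈ S
    · exact ⟨.inr ⟨v, hv⟩, by simp [huv.symm]⟩
    obtain ⟨x, hux, hvx⟩ := hTD.edge_mem huv
    exact ⟨.inl x, (mem_detachBags_inl_of_notMem hu).mpr (.inl hux),
      (mem_detachBags_inl_of_notMem hv).mpr (.inl hvx)⟩
  support_connected v := by
    by_cases hv : v ∈ S
    · rw [setOf_mem_detachBags_of_mem hS hv, induce_singleton_eq_top]
      exact connected_top
    refine induce_attachLeaves_connected ?_ fun s hs => ?_
    · rw [preimage_inl_setOf_mem_detachBags hv]
      exact induce_union_iUnion_connected (hTD.support_connected v)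
        (fun s => hTD.support_connected s) fun s => (hTD.edge_mem s.2).imp fun _ h => h.symm
    · have hsv : G.Adj s v := (hs : v = s ∨ G.Adj s v).resolve_left fun h => hv (h ▸ s.2)
      exact (mem_detachBags_inl_of_notMem hv).mpr (.inr ⟨s, ⟨hσ s, s.2⟩, hsv⟩)

theorem stmt11 (V : Type) (G : SimpleGraph V)
    {ι : Type} (T : SimpleGraph ι) (bag : ι → Set V)
    (hTD : IsTreeDecomp G T bag)
    (Sl : Set V) (hSl : IsIndep G Sl)
    (xs : Sl → ι) (hxs : ∀ s : Sl, (s : V) ∈ bag (xs s)) :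
    IsTreeDecomp G
      (SimpleGraph.fromRel (fun a b : ι ⊕ Sl =>
        match a, b with
        | Sum.inl a, Sum.inl b => T.Adj a b
        | Sum.inl a, Sum.inr s => a = xs s
        | _, _ => False))
      (Sum.elim (fun x : ι => (bag x \ Sl) ∪ nbhd G (bag x ∩ Sl))
        (fun s : Sl => insert (s : V) (G.neighborSet (s : V)))) := by
  convert hTD.attachLeaves hSl hxs using 2
  · ext (a | _) (b | _) <;> rfl
  · rfl
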